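/- arXiv:1503.06174 — 3 statements merged into one kernel-verified Lean document; each statement's English description precedes it below -/
import Mathlib

section
/- For every integer L ≥ 0, every p ∈ [0,1), and every integer ℓ with 0 ≤ ℓ ≤ L, the final size probabilities satisfy the triangular system Σ_{k=0}^{ℓ} P_k^L(p) · C(L−k, ℓ−k) · (1−p)^{−(L−ℓ)(k+1)} = C(L, ℓ), where C(a,b) denotes the binomial coefficient. -/
open Classical

noncomputable section

/-- Probability of the event `E` when, independently, each coordinate `i` is `true`
with probability `q i` (and `false` with probability `1 - q i`). -/
noncomputable def pr {ι : Type*} [Fintype ι] (q : ι → ℝ) (E : Set (ι → Bool)) : ℝ :=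
  ∑ ω ∈ Finset.univ.filter (· ∈ E), ∏ i, (if ω i then q i else 1 - q i)

/-- The (simple) graph determined by a configuration of edge indicators on unordered pairs:
distinct vertices `u`, `v` are adjacent iff the indicator of the pair `{u, v}` is `true`.
With the i.i.d. product measure `pr (fun _ => p)` on configurations this is the
Erdős–Rényi random graph `G(m, p)`. -/
def genGraph {V : Type*} (ω : Sym2 V → Bool) : SimpleGraph V where
  Adj u v := u ≠ v ∧ ω s(u, v) = true
  symm := ⟨fun u v h => ⟨h.1.symm, by rw [Sym2.eq_swap]; exact h.2⟩⟩
  loopless := ⟨fun u h => h.1 rfl⟩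

/-- The cluster (connected component) of the vertex `v` in the graph `G`, as a `Finset`. -/
noncomputable def cluster {V : Type*} [Fintype V] (G : SimpleGraph V) (v : V) : Finset V :=
  Finset.univ.filter fun w => G.Reachable v w

/-- `PkL L k p` : the probability that in the Erdős–Rényi graph `G(L+1, p)` the cluster of
vertex `0` contains exactly `k` of the other `L` vertices (i.e. has cardinality `k + 1`).
Equivalently, the probability that a standard SIR epidemic with per-pair infection
probability `p`, started from one initial infective among `L` susceptibles, ultimately
infects exactly `k` of the susceptibles. -/
noncomputable def PkL (L k : ℕ) (p : ℝ) : ℝ :=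
  pr (fun _ : Sym2 (Fin (L + 1)) => p) {ω | (cluster (genGraph ω) 0).card = k + 1}


variable {ι : Type*} [Fintype ι]

/-- weight of a configuration -/
noncomputable def wt (q : ι → ℝ) (ω : ι → Bool) : ℝ := ∏ i, (if ω i then q i else 1 - q i)

lemma pr_eq (q : ι → ℝ) (E : Set (ι → Bool)) :
    pr q E = ∑ ω : ι → Bool, E.indicator (wt q) ω := by
  classical
  unfold pr
  rw [Finset.sum_filter]
  refine Finset.sum_congr rfl fun ω _ => ?_
  by_cases hω : ω ∈ E
  · rw [if_pos hω, Set.indicator_of_mem hω]; rfl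
  · rw [if_neg hω, Set.indicator_of_notMem hω]

lemma pr_univ (q : ι → ℝ) : pr q Set.univ = 1 := by
  classical
  rw [pr_eq]
  simp only [Set.indicator_univ]
  unfold wt
  rw [← Fintype.prod_sum (fun i (b : Bool) => if b then q i else 1 - q i)]
  simp

lemma pr_congr (q : ι → ℝ) {E F : Set (ι → Bool)} (h : E = F) : pr q E = pr q F := by rw [h]

/-- partition lemma -/
lemma pr_partition {α : Type*} (q : ι → ℝ) (E : Set (ι → Bool)) (s : Finset α)
    (g : (ι → Bool) → α) (h : ∀ ω ∈ E, g ω ∈ s) :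
    pr q E = ∑ a ∈ s, pr q (E ∩ {ω | g ω = a}) := by
  classical
  simp only [pr_eq]
  rw [Finset.sum_comm]
  refine Finset.sum_congr rfl fun ω _ => ?_
  by_cases hω : ω ∈ E
  · rw [Finset.sum_eq_single (g ω)]
    · have hmem : ω ∈ (E ∩ {ω' | g ω' = g ω} : Set (ι → Bool)) := ⟨hω, rfl⟩
      rw [Set.indicator_of_mem hω, Set.indicator_of_mem hmem]
    · intro b _ hb
      have hnm : ω ∉ (E ∩ {ω' | g ω' = b} : Set (ι → Bool)) := fun hm => hb hm.2.symm
      exact Set.indicator_of_notMem hnm _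
    · intro hgs; exact absurd (h ω hω) hgs
  · rw [Set.indicator_of_notMem hω]
    refine (Finset.sum_eq_zero fun b _ => ?_).symm
    have hnm : ω ∉ (E ∩ {ω' | g ω' = b} : Set (ι → Bool)) := fun hm => hω hm.1
    exact Set.indicator_of_notMem hnm _

lemma pr_force_one (q : ι → ℝ) (E : Set (ι → Bool)) (i : ι)
    (hE : ∀ (ω : ι → Bool) (b : Bool), ω ∈ E ↔ Function.update ω i b ∈ E) :
    pr q (E ∩ {ω | ω i = false}) = pr q E * (1 - q i) := by
  classical
  set w : ι → Bool → ℝ := fun j b => if b then q j else 1 - q j with hw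
  set T : Bool → ℝ := fun b => ∑ ω : ι → Bool,
      if ω ∈ E ∧ ω i = b then ∏ j ∈ Finset.univ.erase i, w j (ω j) else 0 with hT
  have prod_split : ∀ ω : ι → Bool, wt q ω =
      w i (ω i) * ∏ j ∈ Finset.univ.erase i, w j (ω j) := by
    intro ω; exact (Finset.mul_prod_erase Finset.univ _ (Finset.mem_univ i)).symm
  have flip_invol : Function.Involutive (fun ω : ι → Bool => Function.update ω i (!(ω i))) := by
    intro ω; funext j
    by_cases hj : j = i
    · subst hj; simp [Function.update_self]
    · simp [Function.update_of_ne hj]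
  have hTT : T true = T false := by
    show (∑ ω : ι → Bool, if ω ∈ E ∧ ω i = true then ∏ j ∈ Finset.univ.erase i, w j (ω j) else 0)
      = ∑ ω : ι → Bool, if ω ∈ E ∧ ω i = false then ∏ j ∈ Finset.univ.erase i, w j (ω j) else 0
    rw [← Fintype.sum_bijective _ flip_invol.bijective _ _ (fun ω => rfl)]
    refine Finset.sum_congr rfl fun ω _ => ?_
    have h1 : Function.update ω i (!(ω i)) ∈ E ↔ ω ∈ E := (hE ω (!(ω i))).symm
    have h2 : (Function.update ω i (!(ω i))) i = !(ω i) := Function.update_self _ _ _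
    have h3 : ∀ j ∈ Finset.univ.erase i, w j ((Function.update ω i (!(ω i))) j) = w j (ω j) := by
      intro j hj
      rw [Function.update_of_ne (Finset.ne_of_mem_erase hj)]
    rw [Finset.prod_congr rfl h3]
    by_cases hb : ω i = false <;> simp_all
  have hprE : pr q E = T false := by
    rw [pr_eq]
    have key : ∀ ω : ι → Bool, E.indicator (wt q) ω =
        q i * (if ω ∈ E ∧ ω i = true then ∏ j ∈ Finset.univ.erase i, w j (ω j) else 0)
        + (1 - q i) * (if ω ∈ E ∧ ω i = false then ∏ j ∈ Finset.univ.erase i, w j (ω j) else 0) := by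
      intro ω
      by_cases hω : ω ∈ E
      · rw [Set.indicator_of_mem hω, prod_split ω]
        cases hb : ω i <;> simp [hω, hb, hw] <;> ring
      · rw [Set.indicator_of_notMem hω]
        simp [hω]
    rw [Finset.sum_congr rfl (fun ω _ => key ω), Finset.sum_add_distrib,
      ← Finset.mul_sum, ← Finset.mul_sum]
    show q i * T true + (1 - q i) * T false = T false
    rw [hTT]; ring
  have hprEF : pr q (E ∩ {ω | ω i = false}) = (1 - q i) * T false := by
    rw [pr_eq]
    have key : ∀ ω : ι → Bool, (E ∩ {ω | ω i = false}).indicator (wt q) ω =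
        (1 - q i) * (if ω ∈ E ∧ ω i = false then ∏ j ∈ Finset.univ.erase i, w j (ω j) else 0) := by
      intro ω
      by_cases hω : ω ∈ E ∧ ω i = false
      · have hmem : ω ∈ (E ∩ {ω' | ω' i = false} : Set (ι → Bool)) := ⟨hω.1, hω.2⟩
        rw [Set.indicator_of_mem hmem, if_pos hω, prod_split ω, hω.2]
        simp [hw]
      · have hnm : ω ∉ (E ∩ {ω' | ω' i = false} : Set (ι → Bool)) := fun h => hω ⟨h.1, h.2⟩
        rw [Set.indicator_of_notMem hnm, if_neg hω, mul_zero]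
    rw [Finset.sum_congr rfl (fun ω _ => key ω), ← Finset.mul_sum]
  rw [hprEF, hprE]; ring

lemma pr_force (q : ι → ℝ) (E : Set (ι → Bool)) (B : Finset ι)
    (hE : ∀ (ω ω' : ι → Bool), (∀ j ∉ B, ω j = ω' j) → (ω ∈ E ↔ ω' ∈ E)) :
    pr q (E ∩ {ω | ∀ i ∈ B, ω i = false}) = pr q E * ∏ i ∈ B, (1 - q i) := by
  classical
  induction B using Finset.induction_on generalizing E with
  | empty =>
      rw [Finset.prod_empty, mul_one]
      apply pr_congr
      ext ω; simp
  | @insert a B ha ih =>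
      have step1 : E ∩ {ω | ∀ i ∈ insert a B, ω i = false}
          = (E ∩ {ω | ∀ i ∈ B, ω i = false}) ∩ {ω | ω a = false} := by
        ext ω
        simp only [Set.mem_inter_iff, Set.mem_setOf_eq, Finset.mem_insert]
        constructor
        · intro h; exact ⟨⟨h.1, fun i hi => h.2 i (Or.inr hi)⟩, h.2 a (Or.inl rfl)⟩
        · rintro ⟨⟨h1, h2⟩, h3⟩
          exact ⟨h1, fun i hi => hi.elim (fun h => h ▸ h3) (h2 i)⟩
      rw [pr_congr q step1]
      have hE' : ∀ (ω : ι → Bool) (b : Bool),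
          ω ∈ E ∩ {ω | ∀ i ∈ B, ω i = false} ↔
          Function.update ω a b ∈ E ∩ {ω | ∀ i ∈ B, ω i = false} := by
        intro ω b
        have hagree : ∀ j ∉ insert a B, ω j = Function.update ω a b j := by
          intro j hj
          rw [Function.update_of_ne (fun h : j = a => hj (h ▸ Finset.mem_insert_self a B))]
        constructor
        · rintro ⟨h1, h2⟩
          refine ⟨(hE ω _ hagree).mp h1, fun i hi => ?_⟩
          rw [Function.update_of_ne (fun h : i = a => ha (h ▸ hi))]
          exact h2 i hi
        · rintro ⟨h1, h2⟩
          refine ⟨(hE ω _ hagree).mpr h1, fun i hi => ?_⟩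
          have := h2 i hi
          rwa [Function.update_of_ne (fun h : i = a => ha (h ▸ hi))] at this
      rw [pr_force_one q _ a hE']
      rw [ih _ (fun ω ω' h => hE ω ω' (fun j hj => h j (fun hjB => hj (Finset.mem_insert_of_mem hjB))))]
      rw [Finset.prod_insert ha]
      ring

lemma card_supersets {α : Type*} [DecidableEq α] (t A : Finset α) (hA : A ⊆ t) (l : ℕ)
    (hk : A.card ≤ l) :
    ((t.powersetCard l).filter (fun S => A ⊆ S)).card
      = (t.card - A.card).choose (l - A.card) := by
  classical
  rw [← Finset.card_sdiff_of_subset hA, ← Finset.card_powersetCard]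
  apply Finset.card_bij (fun S _ => S \ A)
  · intro S hS
    simp only [Finset.mem_filter, Finset.mem_powersetCard] at hS
    rw [Finset.mem_powersetCard]
    exact ⟨Finset.sdiff_subset_sdiff hS.1.1 le_rfl, by rw [Finset.card_sdiff_of_subset hS.2, hS.1.2]⟩
  · intro S hS S' hS' h
    simp only [Finset.mem_filter, Finset.mem_powersetCard] at hS hS'
    have : S \ A ∪ A = S' \ A ∪ A := by rw [h]
    rwa [Finset.sdiff_union_of_subset hS.2, Finset.sdiff_union_of_subset hS'.2] at this
  · intro U hU
    rw [Finset.mem_powersetCard] at hU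
    refine ⟨U ∪ A, ?_, ?_⟩
    · simp only [Finset.mem_filter, Finset.mem_powersetCard]
      have hdisj : Disjoint U A := Finset.disjoint_of_subset_left hU.1 Finset.sdiff_disjoint
      refine ⟨⟨Finset.union_subset (hU.1.trans (Finset.sdiff_subset)) hA, ?_⟩,
        Finset.subset_union_right⟩
      rw [Finset.card_union_of_disjoint hdisj, hU.2]
      omega
    · have hdisj : Disjoint U A := Finset.disjoint_of_subset_left hU.1 Finset.sdiff_disjoint
      rw [Finset.union_sdiff_distrib, Finset.sdiff_self, Finset.union_empty,
        Finset.sdiff_eq_self_of_disjoint hdisj]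

section Graphs
variable {V : Type*} [Fintype V] [DecidableEq V]

/-- the graph `genGraph ω` restricted to the vertex set `S` -/
def resGraph (S : Finset V) (ω : Sym2 V → Bool) : SimpleGraph V where
  Adj u v := u ≠ v ∧ ω s(u, v) = true ∧ u ∈ S ∧ v ∈ S
  symm := ⟨fun u v h => ⟨h.1.symm, by rw [Sym2.eq_swap]; exact h.2.1, h.2.2.2, h.2.2.1⟩⟩
  loopless := ⟨fun u h => h.1 rfl⟩

lemma resGraph_le (S : Finset V) (ω : Sym2 V → Bool) : resGraph S ω ≤ genGraph ω := by
  intro u w h; exact ⟨h.1, h.2.1⟩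

lemma mem_cluster {G : SimpleGraph V} {v w : V} : w ∈ cluster G v ↔ G.Reachable v w := by
  simp [cluster]

lemma self_mem_cluster {G : SimpleGraph V} {v : V} : v ∈ cluster G v :=
  mem_cluster.mpr (SimpleGraph.Reachable.refl v)

lemma walk_closed {G : SimpleGraph V} (C : Set V)
    (hC : ∀ ⦃u x : V⦄, u ∈ C → G.Adj u x → x ∈ C) :
    ∀ {u w : V}, u ∈ C → G.Walk u w → w ∈ C := by
  intro u w hu p
  induction p with
  | nil => exact hu
  | cons h p ih => exact ih (hC hu h)

lemma cluster_res_subset (S : Finset V) (ω : Sym2 V → Bool) {v : V} (hv : v ∈ S) :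
    cluster (resGraph S ω) v ⊆ S := by
  intro w hw
  obtain ⟨p⟩ := mem_cluster.mp hw
  exact walk_closed (fun x => x ∈ S) (fun u x _ (h : (resGraph S ω).Adj u x) => h.2.2.2) hv p

/-- Key event decomposition. -/
lemma cluster_eq_iff (ω : Sym2 V → Bool) (v : V) (A T : Finset V) (hAT : A ⊆ T) (hvA : v ∈ A) :
    cluster (genGraph ω) v = A ↔
      (cluster (resGraph T ω) v = A ∧ ∀ u ∈ A, ∀ x, x ∉ T → ω s(u, x) = false) := by
  constructor
  · intro hcl
    have hbnd : ∀ u ∈ A, ∀ x, x ∉ T → ω s(u, x) = false := by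
      intro u hu x hx
      by_contra h
      have hωt : ω s(u, x) = true := by revert h; cases ω s(u, x) <;> simp
      have hux : u ≠ x := fun h => hx (h ▸ hAT hu)
      have hru : (genGraph ω).Reachable v u := mem_cluster.mp (hcl ▸ hu)
      have hrx : (genGraph ω).Reachable v x := hru.trans (SimpleGraph.Adj.reachable ⟨hux, hωt⟩)
      exact hx (hAT (hcl ▸ mem_cluster.mpr hrx))
    refine ⟨?_, hbnd⟩
    apply Finset.Subset.antisymm
    · intro w hw
      rw [← hcl, mem_cluster]
      exact ((mem_cluster.mp hw)).mono (resGraph_le T ω)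
    · intro w hw
      rw [mem_cluster]
      obtain ⟨p⟩ := mem_cluster.mp (hcl ▸ hw : w ∈ cluster (genGraph ω) v)
      -- transfer the walk
      clear hw
      have : ∀ (u w : V), (resGraph T ω).Reachable v u → (genGraph ω).Walk u w →
          (resGraph T ω).Reachable v w := by
        intro u w hu p
        induction p with
        | nil => exact hu
        | @cons a b c hadj p ih =>
            have haA : a ∈ A := by
              rw [← hcl, mem_cluster]
              exact hu.mono (resGraph_le T ω)
            have hbA : b ∈ A := by
              rw [← hcl, mem_cluster]
              exact (hu.mono (resGraph_le T ω)).trans hadj.reachable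
            have : (resGraph T ω).Adj a b := ⟨hadj.1, hadj.2, hAT haA, hAT hbA⟩
            exact ih (hu.trans this.reachable)
      exact this v w (SimpleGraph.Reachable.refl v) p
  · rintro ⟨hres, hbnd⟩
    apply Finset.Subset.antisymm
    · intro w hw
      obtain ⟨p⟩ := mem_cluster.mp hw
      refine walk_closed (fun x => x ∈ A) ?_ hvA p
      intro u x hu hadj
      have huA : u ∈ A := hu
      have hxT : x ∈ T := by
        by_contra hx
        have := hbnd u huA x hx
        rw [hadj.2] at this; exact Bool.noConfusion this
      have hradj : (resGraph T ω).Adj u x := ⟨hadj.1, hadj.2, hAT huA, hxT⟩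
      show x ∈ A
      rw [← hres]
      exact mem_cluster.mpr
        ((mem_cluster.mp (hres ▸ huA : u ∈ cluster (resGraph T ω) v)).trans hradj.reachable)
    · intro w hw
      rw [mem_cluster]
      exact (mem_cluster.mp (hres ▸ hw : w ∈ cluster (resGraph T ω) v)).mono (resGraph_le T ω)

end Graphs

section Bnd
variable {V : Type*} [Fintype V] [DecidableEq V]

def bnd (A T : Finset V) : Finset (Sym2 V) :=
  (A ×ˢ Tᶜ).image (fun p => s(p.1, p.2))

lemma mem_bnd {A T : Finset V} {e : Sym2 V} :
    e ∈ bnd A T ↔ ∃ u x, u ∈ A ∧ x ∉ T ∧ e = s(u, x) := by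
  simp only [bnd, Finset.mem_image, Finset.mem_product, Finset.mem_compl, Prod.exists]
  constructor
  · rintro ⟨u, x, ⟨hu, hx⟩, rfl⟩; exact ⟨u, x, hu, hx, rfl⟩
  · rintro ⟨u, x, hu, hx, rfl⟩; exact ⟨u, x, ⟨hu, hx⟩, rfl⟩

lemma not_mem_bnd {A T : Finset V} (hAT : A ⊆ T) {u x : V} (hu : u ∈ T) (hx : x ∈ T) :
    s(u, x) ∉ bnd A T := by
  rw [mem_bnd]
  rintro ⟨a, b, ha, hb, he⟩
  rw [Sym2.eq_iff] at he
  rcases he with ⟨rfl, rfl⟩ | ⟨rfl, rfl⟩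
  · exact hb hx
  · exact hb hu

lemma card_bnd {A T : Finset V} (hAT : A ⊆ T) : (bnd A T).card = A.card * Tᶜ.card := by
  rw [bnd, Finset.card_image_of_injOn, Finset.card_product]
  rintro ⟨u, x⟩ h ⟨u', x'⟩ h' he
  simp only [Finset.mem_coe, Finset.mem_product, Finset.mem_compl] at h h'
  simp only at he
  rw [Sym2.eq_iff] at he
  rcases he with ⟨rfl, rfl⟩ | ⟨rfl, rfl⟩
  · rfl
  · exact absurd (hAT h'.1) h.2

/-- Factorization of the full-cluster event probability. -/
lemma pr_full_eq (p : ℝ) (v : V) (A T : Finset V) (hAT : A ⊆ T) (hvA : v ∈ A) :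
    pr (fun _ : Sym2 V => p) {ω | cluster (genGraph ω) v = A}
      = pr (fun _ : Sym2 V => p) {ω | cluster (resGraph T ω) v = A}
          * (1 - p) ^ (A.card * Tᶜ.card) := by
  have hev : {ω : Sym2 V → Bool | cluster (genGraph ω) v = A}
      = {ω : Sym2 V → Bool | cluster (resGraph T ω) v = A}
        ∩ {ω | ∀ e ∈ bnd A T, ω e = false} := by
    ext ω
    simp only [Set.mem_setOf_eq, Set.mem_inter_iff]
    rw [cluster_eq_iff ω v A T hAT hvA]
    constructor
    · rintro ⟨h1, h2⟩
      refine ⟨h1, fun e he => ?_⟩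
      obtain ⟨u, x, hu, hx, rfl⟩ := mem_bnd.mp he
      exact h2 u hu x hx
    · rintro ⟨h1, h2⟩
      exact ⟨h1, fun u hu x hx => h2 _ (mem_bnd.mpr ⟨u, x, hu, hx, rfl⟩)⟩
  rw [pr_congr _ hev]
  rw [pr_force _ _ (bnd A T) ?_]
  · rw [Finset.prod_const, card_bnd hAT]
  · intro ω ω' hagree
    have hgr : resGraph T ω = resGraph T ω' := by
      ext u w
      show (u ≠ w ∧ ω s(u,w) = true ∧ u ∈ T ∧ w ∈ T) ↔
        (u ≠ w ∧ ω' s(u,w) = true ∧ u ∈ T ∧ w ∈ T)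
      constructor
      · rintro ⟨h1, h2, h3, h4⟩
        exact ⟨h1, (hagree _ (not_mem_bnd hAT h3 h4)) ▸ h2, h3, h4⟩
      · rintro ⟨h1, h2, h3, h4⟩
        exact ⟨h1, (hagree _ (not_mem_bnd hAT h3 h4)) ▸ h2, h3, h4⟩
    show cluster (resGraph T ω) v = A ↔ cluster (resGraph T ω') v = A
    rw [hgr]

end Bnd

section Part
variable {V : Type*} [Fintype V] [DecidableEq V]

lemma sum_res_one (p : ℝ) (v : V) (S : Finset V) (hv : v ∉ S) :
    ∑ A ∈ S.powerset,
        pr (fun _ : Sym2 V => p) {ω | cluster (resGraph (insert v S) ω) v = insert v A} = 1 := by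
  rw [← pr_univ (fun _ : Sym2 V => p)]
  rw [pr_partition (fun _ : Sym2 V => p) Set.univ S.powerset
    (fun ω => (cluster (resGraph (insert v S) ω) v).erase v) ?_]
  · refine Finset.sum_congr rfl fun A hA => ?_
    apply pr_congr
    have hvA : v ∉ A := fun h => hv (Finset.mem_powerset.mp hA h)
    ext ω
    simp only [Set.mem_inter_iff, Set.mem_univ, true_and, Set.mem_setOf_eq]
    constructor
    · intro h
      rw [h, Finset.erase_insert hvA]
    · intro h
      rw [← h, Finset.insert_erase self_mem_cluster]
  · intro ω _
    rw [Finset.mem_powerset]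
    have h1 : cluster (resGraph (insert v S) ω) v ⊆ insert v S :=
      cluster_res_subset _ _ (Finset.mem_insert_self v S)
    intro x hx
    have := h1 (Finset.mem_of_mem_erase hx)
    rcases Finset.mem_insert.mp this with h | h
    · exact absurd h (Finset.ne_of_mem_erase hx)
    · exact h

lemma pr_card_eq (p : ℝ) (v : V) (k : ℕ) :
    pr (fun _ : Sym2 V => p) {ω | (cluster (genGraph ω) v).card = k + 1}
      = ∑ A ∈ (Finset.univ.erase v).powersetCard k,
          pr (fun _ : Sym2 V => p) {ω | cluster (genGraph ω) v = insert v A} := by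
  rw [pr_partition (fun _ : Sym2 V => p) {ω | (cluster (genGraph ω) v).card = k + 1}
    ((Finset.univ.erase v).powersetCard k) (fun ω => (cluster (genGraph ω) v).erase v) ?_]
  · refine Finset.sum_congr rfl fun A hA => ?_
    apply pr_congr
    rw [Finset.mem_powersetCard] at hA
    have hvA : v ∉ A := fun h => Finset.notMem_erase v Finset.univ (hA.1 h)
    ext ω
    simp only [Set.mem_inter_iff, Set.mem_setOf_eq]
    constructor
    · rintro ⟨h1, h2⟩
      rw [← h2, Finset.insert_erase self_mem_cluster]
    · intro h
      rw [h]
      constructor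
      · rw [Finset.card_insert_of_notMem hvA, hA.2]
      · rw [Finset.erase_insert hvA]
  · intro ω hω
    rw [Finset.mem_powersetCard]
    constructor
    · intro x hx
      exact Finset.mem_erase.mpr ⟨Finset.ne_of_mem_erase hx, Finset.mem_univ x⟩
    · rw [Finset.card_erase_of_mem self_mem_cluster, hω]
      rfl

end Part


/-- **Final size equations** (Theorem 3.1): for every `L ≥ 0`, `p ∈ [0,1)` and `0 ≤ ℓ ≤ L`,
`∑_{k=0}^{ℓ} P_k^L(p) · C(L−k, ℓ−k) · (1−p)^{−(L−ℓ)(k+1)} = C(L, ℓ)`. -/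
theorem final_size_equations (L : ℕ) (p : ℝ) (hp0 : 0 ≤ p) (hp1 : p < 1) :
    ∀ l ≤ L, ∑ k ∈ Finset.range (l + 1),
        PkL L k p * (Nat.choose (L - k) (l - k) : ℝ) *
          (1 - p) ^ (-(((L - l) * (k + 1) : ℕ) : ℤ)) = (Nat.choose L l : ℝ) := by
  intro l hl
  classical
  set q : ℝ := 1 - p with hqdef
  have hq0 : 0 < q := by rw [hqdef]; linarith
  have hq : q ≠ 0 := ne_of_gt hq0
  set Others : Finset (Fin (L + 1)) := Finset.univ.erase 0 with hO
  have hOcard : Others.card = L := by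
    rw [hO, Finset.card_erase_of_mem (Finset.mem_univ _), Finset.card_univ, Fintype.card_fin]
    omega
  set F : Finset (Fin (L + 1)) → ℝ := fun A =>
    pr (fun _ : Sym2 (Fin (L + 1)) => p) {ω | cluster (genGraph ω) 0 = insert 0 A}
      * q ^ (-(((A.card + 1) * (L - l) : ℕ) : ℤ)) with hF
  -- Step A : for each admissible S the F-sum over subsets is 1
  have stepA : ∀ S ∈ Others.powersetCard l, ∑ A ∈ S.powerset, F A = 1 := by
    intro S hS
    rw [Finset.mem_powersetCard] at hS
    have h0S : (0 : Fin (L + 1)) ∉ S := fun h =>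
      Finset.notMem_erase 0 Finset.univ (hS.1 h)
    rw [← sum_res_one p 0 S h0S]
    refine Finset.sum_congr rfl fun A hA => ?_
    rw [Finset.mem_powerset] at hA
    have hvA : (0 : Fin (L + 1)) ∉ A := fun h => h0S (hA h)
    have hsub : insert 0 A ⊆ insert 0 S := Finset.insert_subset_insert 0 hA
    have hfull := pr_full_eq p 0 (insert 0 A) (insert 0 S) hsub (Finset.mem_insert_self 0 A)
    have c1 : (insert (0 : Fin (L + 1)) A).card = A.card + 1 :=
      Finset.card_insert_of_notMem hvA
    have c2 : ((insert (0 : Fin (L + 1)) S)ᶜ).card = L - l := by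
      rw [Finset.card_compl, Finset.card_insert_of_notMem h0S, hS.2, Fintype.card_fin]
      omega
    rw [c1, c2] at hfull
    show pr (fun _ : Sym2 (Fin (L + 1)) => p) {ω | cluster (genGraph ω) 0 = insert 0 A}
        * q ^ (-(((A.card + 1) * (L - l) : ℕ) : ℤ)) = _
    rw [hfull, mul_assoc, ← zpow_natCast q ((A.card + 1) * (L - l)), ← zpow_add₀ hq]
    simp
  -- Step B,C : choose L l = sum over A of (number of supersets) * F A
  have stepC : (Nat.choose L l : ℝ)
      = ∑ A ∈ Others.powerset,
          (((Others.powersetCard l).filter (fun S => A ⊆ S)).card : ℝ) * F A := by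
    have stepB : (Nat.choose L l : ℝ)
        = ∑ S ∈ Others.powersetCard l, ∑ A ∈ S.powerset, F A := by
      calc (Nat.choose L l : ℝ) = ((Others.powersetCard l).card : ℝ) := by
            rw [Finset.card_powersetCard, hOcard]
        _ = ∑ _S ∈ Others.powersetCard l, (1 : ℝ) := by
            rw [Finset.sum_const, nsmul_eq_mul, mul_one]
        _ = _ := Finset.sum_congr rfl fun S hS => (stepA S hS).symm
    rw [stepB]
    have hrw : ∀ S ∈ Others.powersetCard l,
        ∑ A ∈ S.powerset, F A = ∑ A ∈ Others.powerset, if A ⊆ S then F A else 0 := by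
      intro S hS
      rw [Finset.mem_powersetCard] at hS
      rw [← Finset.sum_filter]
      apply Finset.sum_congr ?_ (fun _ _ => rfl)
      ext A
      simp only [Finset.mem_powerset, Finset.mem_filter]
      exact ⟨fun h => ⟨h.trans hS.1, h⟩, fun h => h.2⟩
    rw [Finset.sum_congr rfl hrw, Finset.sum_comm]
    refine Finset.sum_congr rfl fun A _ => ?_
    rw [← Finset.sum_filter, Finset.sum_const, nsmul_eq_mul]
  -- Step D : group by cardinality
  have stepD : (Nat.choose L l : ℝ)
      = ∑ k ∈ Finset.range (l + 1), ∑ A ∈ Others.powersetCard k,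
          (((L - k).choose (l - k) : ℕ) : ℝ) * F A := by
    rw [stepC, Finset.powerset_card_disjiUnion]
    erw [Finset.sum_disjiUnion]
    rw [hOcard]
    rw [← Finset.sum_subset (Finset.range_subset_range.mpr (by omega : l + 1 ≤ L + 1)) ?_]
    · refine Finset.sum_congr rfl fun k hk => Finset.sum_congr rfl fun A hA => ?_
      rw [Finset.mem_range] at hk
      rw [Finset.mem_powersetCard] at hA
      congr 2
      rw [card_supersets Others A hA.1 l (by omega : A.card ≤ l), hOcard, hA.2]
    · intro k hk hk2
      rw [Finset.mem_range] at hk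
      rw [Finset.mem_range, not_lt] at hk2
      refine Finset.sum_eq_zero fun A hA => ?_
      rw [Finset.mem_powersetCard] at hA
      have : (Others.powersetCard l).filter (fun S => A ⊆ S) = ∅ := by
        rw [Finset.filter_eq_empty_iff]
        intro S hS hAS
        rw [Finset.mem_powersetCard] at hS
        have := Finset.card_le_card hAS
        omega
      rw [this]
      simp
  -- Step E : identify the inner sums with PkL
  rw [stepD]
  refine Finset.sum_congr rfl fun k hk => ?_
  have hinner : ∑ A ∈ Others.powersetCard k,
      (((L - k).choose (l - k) : ℕ) : ℝ) * F A
      = (((L - k).choose (l - k) : ℕ) : ℝ) * (q ^ (-(((k + 1) * (L - l) : ℕ) : ℤ))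
          * ∑ A ∈ Others.powersetCard k,
              pr (fun _ : Sym2 (Fin (L + 1)) => p) {ω | cluster (genGraph ω) 0 = insert 0 A}) := by
    rw [Finset.mul_sum, Finset.mul_sum]
    refine Finset.sum_congr rfl fun A hA => ?_
    rw [Finset.mem_powersetCard] at hA
    show _ * (pr _ _ * q ^ (-(((A.card + 1) * (L - l) : ℕ) : ℤ))) = _
    rw [hA.2]
    ring
  rw [hinner, ← pr_card_eq p 0 k]
  have hP : pr (fun _ : Sym2 (Fin (L + 1)) => p)
      {ω | (cluster (genGraph ω) 0).card = k + 1} = PkL L k p := rfl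
  rw [hP]
  show PkL L k p * _ * _ = _
  have hmc : ((L - l) * (k + 1) : ℕ) = ((k + 1) * (L - l) : ℕ) := Nat.mul_comm _ _
  rw [hmc]
  ring
end
end

section
/- Let V be a finite set, v_0 ∈ V, and let p : V × V → [0,1] be symmetric (p(u,v) = p(v,u)). Construct a random directed graph on V by including, independently for each ordered pair (u,v) of distinct vertices, an arc from u to v with probability p(u,v); and construct a random undirected graph on V by including, independently for each unordered pair {u,v} of distinct vertices, an edge with probability p(u,v). Then the set of vertices reachable from v_0 by a directed path in the directed graph has the same distribution, as a random subset of V, as the connected component of v_0 in the undirected graph. -/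
open Classical

noncomputable section

namespace Aux

variable {ι : Type*} [Fintype ι]

lemma sum_prod_bool (f : ι → Bool → ℝ) :
    ∑ ω : ι → Bool, ∏ i, f i (ω i) = ∏ i, (f i true + f i false) := by
  have h := Finset.prod_univ_sum (fun _ : ι => (Finset.univ : Finset Bool)) f
  rw [Fintype.piFinset_univ] at h
  rw [← h]
  refine Finset.prod_congr rfl fun i _ => ?_
  simp

lemma pr_eq_sum_ite (q : ι → ℝ) (E : Set (ι → Bool)) (inst : ∀ ω : ι → Bool, Decidable (ω ∈ E)) :
    pr q E = ∑ ω : ι → Bool,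
      @ite _ (ω ∈ E) (inst ω) (∏ i, (if ω i then q i else 1 - q i)) 0 := by
  rw [pr, Finset.sum_filter]
  refine Finset.sum_congr rfl fun ω _ => ?_
  by_cases h : ω ∈ E
  · rw [if_pos h, if_pos h]
  · rw [if_neg h, if_neg h]

lemma pr_univ (q : ι → ℝ) : pr q (Set.univ) = 1 := by
  rw [pr_eq_sum_ite q Set.univ (fun _ => Classical.propDecidable _)]
  simp only [Set.mem_univ, if_true]
  rw [sum_prod_bool (fun i b => if b then q i else 1 - q i)]
  simp

lemma sum_weights (q : ι → ℝ) : ∑ ω : ι → Bool, ∏ i, (if ω i then q i else 1 - q i) = 1 := by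
  have := pr_univ q
  rw [pr_eq_sum_ite q Set.univ (fun _ => Classical.propDecidable _)] at this
  simpa using this

lemma pr_empty (q : ι → ℝ) : pr q (∅ : Set (ι → Bool)) = 0 := by
  rw [pr_eq_sum_ite q ∅ (fun _ => Classical.propDecidable _)]; simp

lemma pr_allFalse (q : ι → ℝ) (S : Finset ι) :
    pr q {ω | ∀ i ∈ S, ω i = false} = ∏ i ∈ S, (1 - q i) := by
  rw [pr_eq_sum_ite q _ (fun _ => Classical.propDecidable _)]
  have key : ∀ ω : ι → Bool,
      (@ite _ (ω ∈ {ω : ι → Bool | ∀ i ∈ S, ω i = false}) (Classical.propDecidable _)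
        (∏ i, (if ω i then q i else 1 - q i)) 0)
      = ∏ i, (if i ∈ S then (if ω i then 0 else 1 - q i) else (if ω i then q i else 1 - q i)) := by
    intro ω
    by_cases h : ω ∈ {ω : ι → Bool | ∀ i ∈ S, ω i = false}
    · rw [if_pos h]
      replace h : ∀ i ∈ S, ω i = false := h
      refine Finset.prod_congr rfl fun i _ => ?_
      by_cases hi : i ∈ S
      · rw [if_pos hi, h i hi]; simp
      · rw [if_neg hi]
    · rw [if_neg h, eq_comm]
      replace h : ¬ ∀ i ∈ S, ω i = false := h
      push_neg at h
      obtain ⟨j, hj, hωj⟩ := h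
      apply Finset.prod_eq_zero (Finset.mem_univ j)
      rw [if_pos hj]
      simp only [ne_eq, Bool.not_eq_false] at hωj
      rw [hωj]; simp
  rw [Finset.sum_congr rfl fun ω _ => key ω]
  rw [sum_prod_bool (fun i b => if i ∈ S then (if b then 0 else 1 - q i) else (if b then q i else 1 - q i))]
  rw [show (∏ i ∈ S, (1 - q i)) = ∏ i : ι, (if i ∈ S then 1 - q i else 1) by
    rw [Finset.prod_ite_mem Finset.univ S (fun i => 1 - q i), Finset.univ_inter]]
  refine Finset.prod_congr rfl fun i _ => ?_
  by_cases hi : i ∈ S <;> simp [hi]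

def DependsOn (E : Set (ι → Bool)) (S : Finset ι) : Prop :=
  ∀ ω ω' : ι → Bool, (∀ i ∈ S, ω i = ω' i) → ω ∈ E → ω' ∈ E

lemma DependsOn.mem_iff {E : Set (ι → Bool)} {S : Finset ι} (h : DependsOn E S)
    {ω ω' : ι → Bool} (hag : ∀ i ∈ S, ω i = ω' i) : ω ∈ E ↔ ω' ∈ E :=
  ⟨h ω ω' hag, h ω' ω fun i hi => (hag i hi).symm⟩

lemma pr_inter (q : ι → ℝ) {E F : Set (ι → Bool)} {S T : Finset ι}
    (hE : DependsOn E S) (hF : DependsOn F T) (hST : Disjoint S T) :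
    pr q (E ∩ F) = pr q E * pr q F := by
  set w : (ι → Bool) → ℝ := fun ω => ∏ i, (if ω i then q i else 1 - q i) with hw
  have hw1 : ∑ τ : ι → Bool, w τ = 1 := by rw [hw]; simpa using sum_weights q
  set m : (ι → Bool) → (ι → Bool) → (ι → Bool) := fun ω τ i => if i ∈ S then ω i else τ i with hm
  have hinv : Function.Involutive (fun x : (ι → Bool) × (ι → Bool) => (m x.1 x.2, m x.2 x.1)) := by
    intro x
    refine Prod.ext (funext fun i => ?_) (funext fun i => ?_) <;>
      by_cases h : i ∈ S <;> simp [m, h]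
  have hmE : ∀ ω τ, (m ω τ ∈ E ↔ ω ∈ E) := fun ω τ =>
    (hE.mem_iff fun i hi => by simp [m, hi]).symm
  have hmF : ∀ ω τ, (m ω τ ∈ F ↔ τ ∈ F) := fun ω τ =>
    (hF.mem_iff fun i hi => by simp [m, (Finset.disjoint_right.1 hST hi)]).symm
  have hwm : ∀ ω τ, w (m ω τ) * w (m τ ω) = w ω * w τ := by
    intro ω τ
    rw [hw]
    simp only
    rw [← Finset.prod_mul_distrib, ← Finset.prod_mul_distrib]
    refine Finset.prod_congr rfl fun i _ => ?_
    by_cases h : i ∈ S <;> simp [m, h, mul_comm]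
  have key : ∑ x : (ι → Bool) × (ι → Bool), (if x.1 ∈ E ∧ x.1 ∈ F then w x.1 * w x.2 else 0)
      = ∑ x : (ι → Bool) × (ι → Bool), (if x.1 ∈ E ∧ x.2 ∈ F then w x.1 * w x.2 else 0) := by
    rw [← Equiv.sum_comp hinv.toPerm
      (fun x : (ι → Bool) × (ι → Bool) => if x.1 ∈ E ∧ x.1 ∈ F then w x.1 * w x.2 else 0)]
    refine Finset.sum_congr rfl fun x _ => ?_
    simp only [Function.Involutive.coe_toPerm]
    rw [hwm x.1 x.2]
    congr 1
    rw [hmE, hmF]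
  have lhs : ∑ x : (ι → Bool) × (ι → Bool), (if x.1 ∈ E ∧ x.1 ∈ F then w x.1 * w x.2 else 0)
      = pr q (E ∩ F) := by
    rw [pr_eq_sum_ite q _ (fun _ => Classical.propDecidable _), Fintype.sum_prod_type]
    refine Finset.sum_congr rfl fun ω _ => ?_
    by_cases h : ω ∈ E ∧ ω ∈ F
    · rw [if_pos (show ω ∈ E ∩ F from h)]
      simp only [if_pos h, ← Finset.mul_sum, hw1, mul_one]; rfl
    · rw [if_neg (show ω ∉ E ∩ F from h)]
      simp only [if_neg h, Finset.sum_const_zero]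
  have rhs : ∑ x : (ι → Bool) × (ι → Bool), (if x.1 ∈ E ∧ x.2 ∈ F then w x.1 * w x.2 else 0)
      = pr q E * pr q F := by
    rw [pr_eq_sum_ite q E (fun _ => Classical.propDecidable _),
      pr_eq_sum_ite q F (fun _ => Classical.propDecidable _),
      Finset.sum_mul_sum, Fintype.sum_prod_type]
    refine Finset.sum_congr rfl fun ω _ => Finset.sum_congr rfl fun τ _ => ?_
    by_cases h1 : ω ∈ E <;> by_cases h2 : τ ∈ F <;> simp [h1, h2, w]
  rw [← lhs, key, rhs]

lemma pr_partition (q : ι → ℝ) {β : Type*} (s : Finset β) (E : β → Set (ι → Bool))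
    (σ : (ι → Bool) → β) (hσs : ∀ ω, σ ω ∈ s) (hσE : ∀ ω, ω ∈ E (σ ω))
    (huniq : ∀ ω, ∀ b ∈ s, ω ∈ E b → b = σ ω) :
    ∑ b ∈ s, pr q (E b) = 1 := by
  simp only [fun b => pr_eq_sum_ite q (E b) (fun _ => Classical.propDecidable _)]
  rw [Finset.sum_comm]
  have key : ∀ ω : ι → Bool,
      ∑ b ∈ s, (if ω ∈ E b then ∏ i, (if ω i then q i else 1 - q i) else 0)
      = ∏ i, (if ω i then q i else 1 - q i) := by
    intro ω
    rw [Finset.sum_eq_single_of_mem (σ ω) (hσs ω)]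
    · rw [if_pos (hσE ω)]
    · intro b hb hne
      rw [if_neg]
      exact fun h => hne (huniq ω b hb h)
  simp only [key]
  exact sum_weights q

end Aux

namespace Aux
section Graph

variable {V : Type*} [Fintype V] [DecidableEq V]

def ERel (ε : V → V → Bool) (B : Finset V) (a b : V) : Prop :=
  a ∈ B ∧ b ∈ B ∧ a ≠ b ∧ ε a b = true

lemma rel_mono {ε : V → V → Bool} {B B' : Finset V} (h : B ⊆ B') {a b : V}
    (hr : Relation.ReflTransGen (ERel ε B) a b) : Relation.ReflTransGen (ERel ε B') a b :=
  Relation.ReflTransGen.mono (fun x y hxy => ⟨h hxy.1, h hxy.2.1, hxy.2.2⟩) _ _ hr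

def reachF (ε : V → V → Bool) (A : Finset V) (v0 : V) : Finset V :=
  A.filter fun v => Relation.ReflTransGen (ERel ε A) v0 v

lemma self_restrict (ε : V → V → Bool) (A : Finset V) (v0 : V) :
    ∀ v, Relation.ReflTransGen (ERel ε A) v0 v →
      Relation.ReflTransGen (ERel ε (reachF ε A v0)) v0 v := by
  intro v h
  induction h with
  | refl => exact Relation.ReflTransGen.refl
  | tail hab hbc ih =>
      exact ih.tail ⟨Finset.mem_filter.2 ⟨hbc.1, hab⟩,
        Finset.mem_filter.2 ⟨hbc.2.1, hab.tail hbc⟩, hbc.2.2⟩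

lemma reach_char (ε : V → V → Bool) (A : Finset V) (v0 : V)
    (B : Finset V) (hB : B ⊆ A) (hv0B : v0 ∈ B) :
    ((∀ v ∈ B, Relation.ReflTransGen (ERel ε B) v0 v) ∧
      ∀ u ∈ B, ∀ v ∈ A, v ∉ B → ε u v = false) ↔ B = reachF ε A v0 := by
  constructor
  · rintro ⟨h1, h2⟩
    apply Finset.ext
    intro v
    simp only [reachF, Finset.mem_filter]
    constructor
    · intro hv; exact ⟨hB hv, rel_mono hB (h1 v hv)⟩
    · rintro ⟨hvA, hrtg⟩
      clear hvA
      induction hrtg with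
      | refl => exact hv0B
      | @tail b c hab hbc ih =>
          by_cases hc : c ∈ B
          · exact hc
          · exfalso
            have h0 := h2 _ ih _ hbc.2.1 hc
            rw [hbc.2.2.2] at h0
            exact Bool.true_eq_false.mp h0
  · rintro rfl
    refine ⟨fun v hv => self_restrict ε A v0 v (Finset.mem_filter.1 hv).2, ?_⟩
    intro u hu v hvA hvB
    by_contra hne
    have hε : ε u v = true := by simpa using hne
    have huv : u ≠ v := fun h => hvB (h ▸ hu)
    have hr : Relation.ReflTransGen (ERel ε A) v0 v :=
      (Finset.mem_filter.1 hu).2.tail ⟨(Finset.mem_filter.1 hu).1, hvA, huv, hε⟩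
    exact hvB (Finset.mem_filter.2 ⟨hvA, hr⟩)

end Graph

end Aux

namespace Aux

section Model

variable {V : Type*} [Fintype V] [DecidableEq V] {ι : Type*} [Fintype ι]

def EV (emb : V × V → ι) (v0 : V) (B : Finset V) : Set (ι → Bool) :=
  {ω | ∀ v ∈ B, Relation.ReflTransGen (ERel (fun a b => ω (emb (a, b))) B) v0 v}

def NV (emb : V × V → ι) (B C : Finset V) : Set (ι → Bool) :=
  {ω | ∀ u ∈ B, ∀ v ∈ C, ω (emb (u, v)) = false}

lemma dependsOn_EV (emb : V × V → ι) (v0 : V) (B : Finset V) :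
    DependsOn (EV emb v0 B) ((B ×ˢ B).image emb) := by
  intro ω ω' hag h v hv
  refine Relation.ReflTransGen.mono (fun x y hxy => ⟨hxy.1, hxy.2.1, hxy.2.2.1, ?_⟩) _ _ (h v hv)
  show ω' (emb (x, y)) = true
  rw [← hag (emb (x, y)) (Finset.mem_image_of_mem emb
    (Finset.mem_product.2 ⟨hxy.1, hxy.2.1⟩))]
  exact hxy.2.2.2

lemma dependsOn_NV (emb : V × V → ι) (B C : Finset V) :
    DependsOn (NV emb B C) ((B ×ˢ C).image emb) := by
  intro ω ω' hag h u hu v hv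
  rw [← hag (emb (u, v)) (Finset.mem_image_of_mem emb (Finset.mem_product.2 ⟨hu, hv⟩))]
  exact h u hu v hv

lemma NV_eq (emb : V × V → ι) (B C : Finset V) :
    NV emb B C = {ω | ∀ i ∈ (B ×ˢ C).image emb, ω i = false} := by
  ext ω
  constructor
  · intro h i hi
    obtain ⟨e, he, rfl⟩ := Finset.mem_image.1 hi
    obtain ⟨h1, h2⟩ := Finset.mem_product.1 he
    exact h e.1 h1 e.2 h2
  · intro h u hu v hv
    exact h (emb (u, v)) (Finset.mem_image_of_mem emb (Finset.mem_product.2 ⟨hu, hv⟩))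

variable (emb : V × V → ι)
variable (hemb : ∀ a b u v : V, emb (a, b) = emb (u, v) → (u = a ∧ v = b) ∨ (u = b ∧ v = a))

include hemb

lemma disj_images {B C : Finset V} (hBC : Disjoint B C) :
    Disjoint ((B ×ˢ B).image emb) ((B ×ˢ C).image emb) := by
  rw [Finset.disjoint_left]
  intro i h1 h2
  obtain ⟨e, he, rfl⟩ := Finset.mem_image.1 h1
  obtain ⟨f, hf, hef⟩ := Finset.mem_image.1 h2
  obtain ⟨ha, hb⟩ := Finset.mem_product.1 he
  obtain ⟨hu, hv⟩ := Finset.mem_product.1 hf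
  rcases hemb e.1 e.2 f.1 f.2 hef.symm with ⟨h', h''⟩ | ⟨h', h''⟩
  · exact Finset.disjoint_left.1 hBC (by rw [h'']; exact hb) hv
  · exact Finset.disjoint_left.1 hBC (by rw [h'']; exact ha) hv

lemma injOn_cross {B C : Finset V} (hBC : Disjoint B C) :
    ∀ e ∈ B ×ˢ C, ∀ f ∈ B ×ˢ C, emb e = emb f → e = f := by
  intro e he f hf hef
  obtain ⟨he1, he2⟩ := Finset.mem_product.1 he
  obtain ⟨hf1, hf2⟩ := Finset.mem_product.1 hf
  rcases hemb e.1 e.2 f.1 f.2 hef with ⟨h', h''⟩ | ⟨h', h''⟩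
  · exact Prod.ext h'.symm h''.symm
  · exact (Finset.disjoint_left.1 hBC hf1 (by rw [h']; exact he2)).elim

lemma pr_NV (q : ι → ℝ) {B C : Finset V} (hBC : Disjoint B C) :
    pr q (NV emb B C) = ∏ u ∈ B, ∏ v ∈ C, (1 - q (emb (u, v))) := by
  rw [NV_eq, pr_allFalse, Finset.prod_image (injOn_cross emb hemb hBC),
    Finset.prod_product]

lemma pr_EV_inter_NV (q : ι → ℝ) (v0 : V) {B C : Finset V} (hBC : Disjoint B C) :
    pr q (EV emb v0 B ∩ NV emb B C)
      = pr q (EV emb v0 B) * ∏ u ∈ B, ∏ v ∈ C, (1 - q (emb (u, v))) := by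
  rw [pr_inter q (dependsOn_EV emb v0 B) (dependsOn_NV emb B C) (disj_images emb hemb hBC),
    pr_NV emb hemb q hBC]

lemma pr_partition_model (q : ι → ℝ) (v0 : V) (A : Finset V) (hv0 : v0 ∈ A) :
    ∑ B ∈ A.powerset.filter (v0 ∈ ·), pr q (EV emb v0 B ∩ NV emb B (A \ B)) = 1 := by
  apply pr_partition q _ _ (fun ω => reachF (fun a b => ω (emb (a, b))) A v0)
  · intro ω
    simp only [Finset.mem_filter, Finset.mem_powerset]
    exact ⟨Finset.filter_subset _ _,
      Finset.mem_filter.2 ⟨hv0, Relation.ReflTransGen.refl⟩⟩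
  · intro ω
    have hchar := (reach_char (fun a b => ω (emb (a, b))) A v0
      (reachF (fun a b => ω (emb (a, b))) A v0) (Finset.filter_subset _ _)
      (Finset.mem_filter.2 ⟨hv0, Relation.ReflTransGen.refl⟩)).2 rfl
    refine ⟨hchar.1, ?_⟩
    intro u hu v hv
    rw [Finset.mem_sdiff] at hv
    exact hchar.2 u hu v hv.1 hv.2
  · intro ω B hBs hω
    simp only [Finset.mem_filter, Finset.mem_powerset] at hBs
    apply (reach_char (fun a b => ω (emb (a, b))) A v0 B hBs.1 hBs.2).1
    refine ⟨hω.1, ?_⟩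
    intro u hu v hvA hvB
    exact hω.2 u hu v (Finset.mem_sdiff.2 ⟨hvA, hvB⟩)

end Model

end Aux

namespace Aux

lemma main_ind {V : Type*} [Fintype V] [DecidableEq V] {ι₁ ι₂ : Type*} [Fintype ι₁] [Fintype ι₂]
    (emb₁ : V × V → ι₁)
    (hemb₁ : ∀ a b u v : V, emb₁ (a, b) = emb₁ (u, v) → (u = a ∧ v = b) ∨ (u = b ∧ v = a))
    (emb₂ : V × V → ι₂)
    (hemb₂ : ∀ a b u v : V, emb₂ (a, b) = emb₂ (u, v) → (u = a ∧ v = b) ∨ (u = b ∧ v = a))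
    (q₁ : ι₁ → ℝ) (q₂ : ι₂ → ℝ) (hq : ∀ u v : V, q₁ (emb₁ (u, v)) = q₂ (emb₂ (u, v)))
    (v0 : V) : ∀ A : Finset V, v0 ∈ A →
      pr q₁ (EV emb₁ v0 A) = pr q₂ (EV emb₂ v0 A) := by
  intro A
  induction A using Finset.strongInduction with
  | _ A ih =>
    intro hv0
    have h1 := pr_partition_model emb₁ hemb₁ q₁ v0 A hv0
    have h2 := pr_partition_model emb₂ hemb₂ q₂ v0 A hv0
    rw [Finset.sum_congr rfl
      (fun B _ => pr_EV_inter_NV emb₁ hemb₁ q₁ v0 (Finset.disjoint_sdiff))] at h1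
    rw [Finset.sum_congr rfl
      (fun B _ => pr_EV_inter_NV emb₂ hemb₂ q₂ v0 (Finset.disjoint_sdiff))] at h2
    have hAs : A ∈ A.powerset.filter (v0 ∈ ·) :=
      Finset.mem_filter.2 ⟨Finset.mem_powerset_self A, hv0⟩
    rw [← Finset.add_sum_erase _ _ hAs] at h1 h2
    have hrest : ∑ B ∈ (A.powerset.filter (v0 ∈ ·)).erase A,
        pr q₁ (EV emb₁ v0 B) * ∏ u ∈ B, ∏ v ∈ A \ B, (1 - q₁ (emb₁ (u, v)))
        = ∑ B ∈ (A.powerset.filter (v0 ∈ ·)).erase A,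
        pr q₂ (EV emb₂ v0 B) * ∏ u ∈ B, ∏ v ∈ A \ B, (1 - q₂ (emb₂ (u, v))) := by
      refine Finset.sum_congr rfl fun B hB => ?_
      obtain ⟨hne, hBs⟩ := Finset.mem_erase.1 hB
      rw [Finset.mem_filter, Finset.mem_powerset] at hBs
      rw [ih B (Finset.ssubset_iff_subset_ne.2 ⟨hBs.1, hne⟩) hBs.2]
      congr 1
      exact Finset.prod_congr rfl fun u _ => Finset.prod_congr rfl fun v _ => by rw [hq u v]
    have hd1 : ∏ u ∈ A, ∏ v ∈ A \ A, (1 - q₁ (emb₁ (u, v))) = 1 := by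
      simp [Finset.sdiff_self]
    have hd2 : ∏ u ∈ A, ∏ v ∈ A \ A, (1 - q₂ (emb₂ (u, v))) = 1 := by
      simp [Finset.sdiff_self]
    rw [hd1, mul_one] at h1
    rw [hd2, mul_one] at h2
    rw [hrest] at h1
    linarith

lemma event_char {V : Type*} [Fintype V] [DecidableEq V] {ι : Type*} [Fintype ι]
    (emb : V × V → ι) (v0 : V) (A : Set V) (hv0 : v0 ∈ A) (ω : ι → Bool) (r : V → V → Prop)
    (hr : ∀ x y, r x y ↔ (x ≠ y ∧ ω (emb (x, y)) = true)) :
    ({v | Relation.ReflTransGen r v0 v} = A) ↔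
      ω ∈ EV emb v0 (Finset.univ.filter (· ∈ A)) ∩
        NV emb (Finset.univ.filter (· ∈ A)) (Finset.univ \ Finset.univ.filter (· ∈ A)) := by
  set AF := Finset.univ.filter (· ∈ A) with hAFdef
  have hmem : ∀ v, v ∈ AF ↔ v ∈ A := by intro v; simp [hAFdef]
  have hv0F : v0 ∈ AF := (hmem v0).2 hv0
  have hrel : ∀ v, Relation.ReflTransGen r v0 v ↔
      Relation.ReflTransGen (ERel (fun a b => ω (emb (a, b))) Finset.univ) v0 v := by
    intro v
    constructor
    · refine Relation.ReflTransGen.mono (fun x y h => ?_) v0 v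
      obtain ⟨h1, h2⟩ := (hr x y).1 h
      exact ⟨Finset.mem_univ x, Finset.mem_univ y, h1, h2⟩
    · exact Relation.ReflTransGen.mono (fun x y h => (hr x y).2 ⟨h.2.2.1, h.2.2.2⟩) v0 v
  have hchar := reach_char (fun a b => ω (emb (a, b))) Finset.univ v0 AF
    (Finset.subset_univ AF) hv0F
  constructor
  · intro h
    have hiff : ∀ v, v ∈ AF ↔ Relation.ReflTransGen r v0 v := fun v =>
      (hmem v).trans (Set.ext_iff.1 h v).symm
    have hAFr : AF = reachF (fun a b => ω (emb (a, b))) Finset.univ v0 := by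
      apply Finset.ext; intro v
      simp only [reachF, Finset.mem_filter]
      constructor
      · intro hv; exact ⟨Finset.mem_univ v, (hrel v).1 ((hiff v).1 hv)⟩
      · rintro ⟨-, hv⟩; exact (hiff v).2 ((hrel v).2 hv)
    obtain ⟨h1, h2⟩ := hchar.2 hAFr
    refine ⟨h1, ?_⟩
    intro u hu v hv
    rw [Finset.mem_sdiff] at hv
    exact h2 u hu v (Finset.mem_univ v) hv.2
  · rintro ⟨h1, h2⟩
    have hAFr : AF = reachF (fun a b => ω (emb (a, b))) Finset.univ v0 :=
      hchar.1 ⟨h1, fun u hu v _ hvB =>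
        h2 u hu v (Finset.mem_sdiff.2 ⟨Finset.mem_univ v, hvB⟩)⟩
    have hmem2 : ∀ u, u ∈ AF ↔
        Relation.ReflTransGen (ERel (fun a b => ω (emb (a, b))) Finset.univ) v0 u := by
      intro u
      rw [hAFr]
      simp only [reachF, Finset.mem_filter, Finset.mem_univ, true_and]
    ext v
    exact (hrel v).trans ((hmem2 v).symm.trans (hmem v))

end Aux

/-- **Directed exploration equals undirected percolation.** Let `V` be a finite set,
`v₀ ∈ V`, and `p : V → V → [0,1]` symmetric. In the random directed graph in which each
arc `(u, v)` (for `u ≠ v`) is present independently with probability `p u v`, the set of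
vertices reachable from `v₀` by a directed path has the same distribution, as a random
subset of `V`, as the connected component of `v₀` in the random undirected graph in which
each unordered pair `{u, v}` of distinct vertices is an edge independently with
probability `p u v`. -/
theorem directed_reach_eq_undirected_component {V : Type*} [Fintype V] [DecidableEq V]
    (v0 : V) (p : V → V → ℝ)
    (hp0 : ∀ u v, 0 ≤ p u v) (hp1 : ∀ u v, p u v ≤ 1)
    (hsym : ∀ u v, p u v = p v u) (A : Set V) :
    pr (fun e : V × V => p e.1 e.2)
        {ω | {v | Relation.ReflTransGen (fun a b => a ≠ b ∧ ω (a, b) = true) v0 v} = A} =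
      pr (Sym2.lift ⟨p, hsym⟩)
        {ω | {v | (genGraph ω).Reachable v0 v} = A} := by
  classical
  set q₁ : V × V → ℝ := fun e => p e.1 e.2 with hq₁
  set q₂ : Sym2 V → ℝ := Sym2.lift ⟨p, hsym⟩ with hq₂
  by_cases hv0 : v0 ∈ A
  · set AF : Finset V := Finset.univ.filter (· ∈ A) with hAFdef
    have hv0F : v0 ∈ AF := by simp [hAFdef, hv0]
    have hemb₁ : ∀ a b u v : V, (id ((a, b) : V × V)) = id ((u, v) : V × V) →
        (u = a ∧ v = b) ∨ (u = b ∧ v = a) := by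
      intro a b u v h
      simp only [id] at h
      left
      exact ⟨(Prod.mk.injEq _ _ _ _ ▸ h).1.symm, (Prod.mk.injEq _ _ _ _ ▸ h).2.symm⟩
    have hemb₂ : ∀ a b u v : V, s(a, b) = s(u, v) →
        (u = a ∧ v = b) ∨ (u = b ∧ v = a) := by
      intro a b u v h
      rcases Sym2.eq_iff.1 h with ⟨h1, h2⟩ | ⟨h1, h2⟩
      · exact Or.inl ⟨h1.symm, h2.symm⟩
      · exact Or.inr ⟨h2.symm, h1.symm⟩
    have ed : {ω : V × V → Bool |
        {v | Relation.ReflTransGen (fun a b => a ≠ b ∧ ω (a, b) = true) v0 v} = A}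
        = Aux.EV (id : V × V → V × V) v0 AF ∩
          Aux.NV (id : V × V → V × V) AF (Finset.univ \ AF) := by
      ext ω
      exact Aux.event_char id v0 A hv0 ω _ (fun x y => Iff.rfl)
    have eu : {ω : Sym2 V → Bool | {v | (genGraph ω).Reachable v0 v} = A}
        = Aux.EV (Function.uncurry Sym2.mk : V × V → Sym2 V) v0 AF ∩
          Aux.NV (Function.uncurry Sym2.mk : V × V → Sym2 V) AF (Finset.univ \ AF) := by
      ext ω
      have hset : {v | (genGraph ω).Reachable v0 v}
          = {v | Relation.ReflTransGen (genGraph ω).Adj v0 v} := by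
        ext v
        exact SimpleGraph.reachable_iff_reflTransGen v0 v
      rw [Set.mem_setOf_eq, hset]
      exact Aux.event_char (Function.uncurry Sym2.mk) v0 A hv0 ω (genGraph ω).Adj (fun x y => Iff.rfl)
    rw [ed, eu,
      Aux.pr_EV_inter_NV (id : V × V → V × V) hemb₁ q₁ v0 Finset.disjoint_sdiff,
      Aux.pr_EV_inter_NV (Function.uncurry Sym2.mk : V × V → Sym2 V) hemb₂ q₂ v0 Finset.disjoint_sdiff]
    have hq : ∀ u v : V, q₁ (id (u, v)) = q₂ (Function.uncurry Sym2.mk (u, v)) := by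
      intro u v
      simp [hq₁, hq₂]
    rw [Aux.main_ind (id : V × V → V × V) hemb₁ (Function.uncurry Sym2.mk : V × V → Sym2 V) hemb₂
      q₁ q₂ hq v0 AF hv0F]
    congr 1
  · have ed : {ω : V × V → Bool |
        {v | Relation.ReflTransGen (fun a b => a ≠ b ∧ ω (a, b) = true) v0 v} = A} = ∅ := by
      ext ω
      simp only [Set.mem_setOf_eq, Set.mem_empty_iff_false, iff_false]
      intro h
      exact hv0 (h ▸ (Relation.ReflTransGen.refl :
        Relation.ReflTransGen (fun a b => a ≠ b ∧ ω (a, b) = true) v0 v0))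
    have eu : {ω : Sym2 V → Bool | {v | (genGraph ω).Reachable v0 v} = A} = ∅ := by
      ext ω
      simp only [Set.mem_setOf_eq, Set.mem_empty_iff_false, iff_false]
      intro h
      exact hv0 (h ▸ (SimpleGraph.Reachable.refl v0 :
        v0 ∈ {v | (genGraph ω).Reachable v0 v}))
    rw [ed, eu, Aux.pr_empty, Aux.pr_empty]
end
end

section
/- Suppose λ_g > 0, m_s ≥ 0 and m_h ≥ 0. Then the matrix M has a real eigenvalue strictly greater than 1 if and only if λ_g (m_s + 1)(m_h + 1) > 1 − m_s m_h. (Equivalently, the largest eigenvalue of M, which is real and positive, exceeds 1 exactly under this inequality; this is the supercriticality condition for the approximating three-type branching process of the independent partition model.) -/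
noncomputable section

/-- The next generation matrix of the three-type branching process approximating the SIR
epidemic in the independent partition model: `lg` is the mean number of global children,
`ms` the mean size of a school epidemic (excluding the initial case), and `mh` the mean
size of a household epidemic (excluding the initial case). -/
def nextGenMatrix (lg ms mh : ℝ) : Matrix (Fin 3) (Fin 3) ℝ :=
  !![lg, ms, mh; lg, 0, mh; lg, ms, 0]

lemma nextGen_det (lg ms mh t : ℝ) :
    (t • (1 : Matrix (Fin 3) (Fin 3) ℝ) - nextGenMatrix lg ms mh).det =
      t ^ 3 - lg * t ^ 2 - (ms * mh + lg * ms + lg * mh) * t - lg * ms * mh := by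
  simp [nextGenMatrix, Matrix.det_fin_three, Matrix.smul_apply, Matrix.one_apply,
    Matrix.sub_apply, Matrix.vecHead, Matrix.vecTail]
  ring

/-- Supercriticality criterion for the approximating three-type branching process of the
independent partition model: if `λ_g > 0`, `m_s ≥ 0`, `m_h ≥ 0`, then `M` has a real
eigenvalue strictly greater than `1` (a real `t` is an eigenvalue of `M` iff
`det(t·I − M) = 0`) if and only if `λ_g (m_s + 1)(m_h + 1) > 1 − m_s m_h`. -/
theorem nextGenMatrix_supercritical_iff (lg ms mh : ℝ)
    (hlg : 0 < lg) (hms : 0 ≤ ms) (hmh : 0 ≤ mh) :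
    (∃ t : ℝ, 1 < t ∧
        (t • (1 : Matrix (Fin 3) (Fin 3) ℝ) - nextGenMatrix lg ms mh).det = 0) ↔
      lg * (ms + 1) * (mh + 1) > 1 - ms * mh := by
  set c : ℝ := ms * mh + lg * ms + lg * mh with hc
  set d : ℝ := lg * ms * mh with hd
  have hc0 : 0 ≤ c := by positivity
  have hd0 : 0 ≤ d := by positivity
  set f : ℝ → ℝ := fun t => t ^ 3 - lg * t ^ 2 - c * t - d with hf
  have hdet : ∀ t : ℝ,
      (t • (1 : Matrix (Fin 3) (Fin 3) ℝ) - nextGenMatrix lg ms mh).det = f t := by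
    intro t; rw [nextGen_det]
  have hcond : (lg * (ms + 1) * (mh + 1) > 1 - ms * mh) ↔ f 1 < 0 := by
    simp only [hf, hc, hd]
    constructor <;> intro h <;> nlinarith
  rw [hcond]
  constructor
  · rintro ⟨t, ht1, ht⟩
    rw [hdet] at ht
    have ht0 : 0 < t := by linarith
    -- from f t = 0 : t^3 = lg * t^2 + c * t + d
    have key : t ^ 3 = lg * t ^ 2 + c * t + d := by simp only [hf] at ht; linarith
    -- 1 = lg/t + c/t^2 + d/t^3 < lg + c + d
    have e1 : lg * t ^ 2 < lg * t ^ 3 := by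
      nlinarith [mul_pos (mul_pos hlg (mul_pos ht0 ht0)) (sub_pos.mpr ht1)]
    have e2 : c * t ≤ c * t ^ 3 := by
      nlinarith [mul_nonneg (mul_nonneg hc0 ht0.le)
        (show (0:ℝ) ≤ t ^ 2 - 1 by nlinarith)]
    have e3 : d ≤ d * t ^ 3 := by
      nlinarith [mul_nonneg hd0 (show (0:ℝ) ≤ t ^ 3 - 1 by nlinarith)]
    have h1 : lg * t ^ 2 + c * t + d < (lg + c + d) * t ^ 3 := by nlinarith
    have h2 : 1 < lg + c + d := by
      have ht3 : 0 < t ^ 3 := by positivity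
      nlinarith
    simp only [hf]; nlinarith
  · intro h1
    set T : ℝ := lg + c + d + 2 with hT
    have hT1 : 1 < T := by linarith
    have hfT : 0 < f T := by
      have hT2 : 0 < T ^ 2 := by positivity
      have : lg + c + d < T := by linarith
      simp only [hf]
      nlinarith [sq_nonneg T, mul_pos hT2 (show (0:ℝ) < T - (lg + c + d) by linarith)]
    have hcont : ContinuousOn f (Set.Icc 1 T) := by fun_prop
    have := intermediate_value_Icc (le_of_lt hT1) hcont
    have h0 : (0 : ℝ) ∈ Set.Icc (f 1) (f T) := ⟨le_of_lt h1, le_of_lt hfT⟩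
    obtain ⟨t, htmem, htval⟩ := this h0
    refine ⟨t, ?_, by rw [hdet]; exact htval⟩
    rcases lt_or_eq_of_le htmem.1 with h | h
    · exact h
    · exfalso; rw [← h] at htval; linarith
end
end
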